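/- Let τ : S_n(ℂ) → S_m(ℂ) be a quantum channel. Then the minimum output entropy satisfies H(τ) ≥ −log σ_1(τ). -/

import Mathlib

open scoped ComplexOrder
open Matrix Kronecker

/-- Frobenius norm of a complex matrix: `√(tr (X Xᴴ))`. -/
noncomputable def frobNorm {n m : Type*} [Fintype n] [Fintype m]
    (X : Matrix n m ℂ) : ℝ :=
  Real.sqrt ((X * Xᴴ).trace.re)

/-- Operator norm `σ₁(τ) = ‖τ‖` of a map between spaces of Hermitian matrices,
with respect to the Frobenius norm. -/
noncomputable def opNorm {n m : Type*} [Fintype n] [Fintype m]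
    (τ : Matrix n n ℂ → Matrix m m ℂ) : ℝ :=
  sSup {c : ℝ | ∃ X : Matrix n n ℂ, X.IsHermitian ∧ frobNorm X ≤ 1 ∧ c = frobNorm (τ X)}

/-- The second singular value of a map between spaces of Hermitian matrices, via the
Courant–Fischer min-max characterization: the infimum over nonzero Hermitian `U` of the
norm of `τ` restricted to the orthogonal complement of `U`. -/
noncomputable def sigma2 {n m : Type*} [Fintype n] [Fintype m]
    (τ : Matrix n n ℂ → Matrix m m ℂ) : ℝ :=
  sInf {c : ℝ | ∃ U : Matrix n n ℂ, U.IsHermitian ∧ U ≠ 0 ∧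
    c = sSup {d : ℝ | ∃ X : Matrix n n ℂ, X.IsHermitian ∧ frobNorm X ≤ 1 ∧
      (U * X).trace.re = 0 ∧ d = frobNorm (τ X)}}

/-- Largest eigenvalue `λ₁` of a Hermitian matrix (junk value `0` otherwise). -/
noncomputable def lambdaMax {n : Type*} [Fintype n] [DecidableEq n]
    (Y : Matrix n n ℂ) : ℝ :=
  if hY : Y.IsHermitian then ⨆ i, hY.eigenvalues i else 0

/-- von Neumann entropy `H(Y) = -∑ λᵢ log λᵢ` of a Hermitian matrix
(junk value `0` otherwise); note `Real.log 0 = 0`. -/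
noncomputable def entropy {n : Type*} [Fintype n] [DecidableEq n]
    (Y : Matrix n n ℂ) : ℝ :=
  if hY : Y.IsHermitian then -∑ i, hY.eigenvalues i * Real.log (hY.eigenvalues i) else 0

/-- Minimum output entropy of a channel: the infimum of `H(τ X)` over density matrices `X`. -/
noncomputable def minEntropy {n m : Type*} [Fintype n] [DecidableEq n] [Fintype m] [DecidableEq m]
    (τ : Matrix n n ℂ → Matrix m m ℂ) : ℝ :=
  sInf {h : ℝ | ∃ X : Matrix n n ℂ, X.PosSemidef ∧ X.trace = 1 ∧ h = entropy (τ X)}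

/-- Eigenvalues of a Hermitian matrix arranged in decreasing order:
`eigsDesc Y 0 = λ₁ ≥ eigsDesc Y 1 = λ₂ ≥ …` (junk value `0` if not Hermitian). -/
noncomputable def eigsDesc {n : ℕ} (Y : Matrix (Fin n) (Fin n) ℂ) : Fin n → ℝ :=
  if hY : Y.IsHermitian then fun i => hY.eigenvalues (Tuple.sort hY.eigenvalues i.rev)
  else fun _ => 0

/-- The sum `λ₁ + ⋯ + λ_k` of the `k` largest eigenvalues of a Hermitian matrix. -/
noncomputable def sumTopEigs {n : ℕ} (k : ℕ) (Y : Matrix (Fin n) (Fin n) ℂ) : ℝ :=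
  ∑ i : Fin n, if (i : ℕ) < k then eigsDesc Y i else 0

/-!
Every eigenvalue of a density matrix `Y` is at most `‖Y‖_F`, so
`H(Y) = -∑ λᵢ log λᵢ ≥ -∑ λᵢ log ‖Y‖_F = -log ‖Y‖_F`. A channel maps a density matrix `X`,
which has `‖X‖_F ≤ 1`, to a density matrix `τ X` with `‖τ X‖_F ≤ σ₁(τ)`; hence
`H(τ X) ≥ -log σ₁(τ)`.
-/

attribute [local instance] Matrix.frobeniusSeminormedAddCommGroup
  Matrix.frobeniusNormedAddCommGroup Matrix.frobeniusNormedSpace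

section FrobeniusNorm

variable {a b : Type*} [Fintype a] [Fintype b]

lemma frobNorm_eq_norm (X : Matrix a b ℂ) : frobNorm X = ‖X‖ := by
  have h : (X * Xᴴ).trace.re = ∑ i, ∑ j, ‖X i j‖ ^ 2 := by
    simp [Matrix.trace, Matrix.mul_apply, Complex.mul_conj', Complex.re_sum,
      ← Complex.ofReal_pow]
  rw [frobNorm, h, Matrix.frobenius_norm_def, Real.sqrt_eq_rpow]
  norm_num [Real.rpow_natCast]

lemma frobNorm_pos_of_trace_eq_one [DecidableEq a] {Y : Matrix a a ℂ} (htr : Y.trace = 1) :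
    0 < frobNorm Y := by
  rw [frobNorm_eq_norm, norm_pos_iff]
  rintro rfl
  simp at htr

variable [DecidableEq a]

lemma Matrix.IsHermitian.trace_mul_self {Y : Matrix a a ℂ} (hY : Y.IsHermitian) :
    (Y * Y).trace = ∑ i, (hY.eigenvalues i : ℂ) ^ 2 := by
  conv_lhs => rw [hY.spectral_theorem, ← map_mul, Unitary.conjStarAlgAut_apply,
    Matrix.trace_mul_cycle, Unitary.coe_star_mul_self, one_mul]
  simp [Matrix.diagonal_mul_diagonal, Matrix.trace_diagonal, sq]

lemma Matrix.IsHermitian.frobNorm_eq {Y : Matrix a a ℂ} (hY : Y.IsHermitian) :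
    frobNorm Y = √(∑ i, hY.eigenvalues i ^ 2) := by
  rw [frobNorm, hY.eq, hY.trace_mul_self]
  simp [Complex.re_sum, ← Complex.ofReal_pow]

lemma Matrix.PosSemidef.sum_eigenvalues_eq_one {Y : Matrix a a ℂ} (hY : Y.PosSemidef)
    (htr : Y.trace = 1) : ∑ i, hY.isHermitian.eigenvalues i = 1 := by
  rw [hY.isHermitian.trace_eq_sum_eigenvalues] at htr
  simpa using congrArg Complex.re htr

lemma Matrix.PosSemidef.frobNorm_le_one {Y : Matrix a a ℂ} (hY : Y.PosSemidef)
    (htr : Y.trace = 1) : frobNorm Y ≤ 1 := by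
  rw [hY.isHermitian.frobNorm_eq, Real.sqrt_le_one, ← one_pow 2,
    ← hY.sum_eigenvalues_eq_one htr]
  exact Finset.sum_sq_le_sq_sum_of_nonneg fun i _ => hY.eigenvalues_nonneg i

lemma Matrix.PosSemidef.eigenvalues_le_frobNorm {Y : Matrix a a ℂ} (hY : Y.PosSemidef) (i : a) :
    hY.isHermitian.eigenvalues i ≤ frobNorm Y := by
  rw [hY.isHermitian.frobNorm_eq]
  exact Real.le_sqrt_of_sq_le
    (Finset.single_le_sum (fun j _ => sq_nonneg (hY.isHermitian.eigenvalues j))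
      (Finset.mem_univ i))

end FrobeniusNorm

lemma neg_log_le_neg_sum_mul_log {ι : Type*} {s : Finset ι} {p : ι → ℝ} {c : ℝ}
    (hp : ∀ i ∈ s, 0 ≤ p i) (hsum : ∑ i ∈ s, p i = 1) (hc : ∀ i ∈ s, p i ≤ c) :
    -Real.log c ≤ -∑ i ∈ s, p i * Real.log (p i) := by
  rw [neg_le_neg_iff]
  calc ∑ i ∈ s, p i * Real.log (p i) ≤ ∑ i ∈ s, p i * Real.log c := by
        refine Finset.sum_le_sum fun i hi => ?_
        rcases (hp i hi).eq_or_lt with h0 | hpos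
        · simp [← h0]
        · exact mul_le_mul_of_nonneg_left (Real.log_le_log hpos (hc i hi)) hpos.le
    _ = Real.log c := by rw [← Finset.sum_mul, hsum, one_mul]

lemma Matrix.PosSemidef.neg_log_frobNorm_le_entropy {a : Type*} [Fintype a] [DecidableEq a]
    {Y : Matrix a a ℂ} (hY : Y.PosSemidef) (htr : Y.trace = 1) :
    -Real.log (frobNorm Y) ≤ entropy Y := by
  rw [entropy, dif_pos hY.isHermitian]
  exact neg_log_le_neg_sum_mul_log (fun i _ => hY.eigenvalues_nonneg i)
    (hY.sum_eigenvalues_eq_one htr) (fun i _ => hY.eigenvalues_le_frobNorm i)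

section OpNormAndMinEntropy

variable {a b : Type*} [Fintype a] [Fintype b]

lemma frobNorm_le_opNorm {τ : Matrix a a ℂ → Matrix b b ℂ} (hτ : Continuous τ)
    {X : Matrix a a ℂ} (hX : X.IsHermitian) (hX1 : frobNorm X ≤ 1) :
    frobNorm (τ X) ≤ opNorm τ := by
  have hbdd : BddAbove ((fun X => ‖τ X‖) '' Metric.closedBall 0 1) :=
    ((isCompact_closedBall 0 1).image (continuous_norm.comp hτ)).bddAbove
  refine le_csSup (hbdd.mono ?_) ⟨X, hX, hX1, rfl⟩
  rintro _ ⟨Y, -, hY1, rfl⟩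
  rw [frobNorm_eq_norm] at hY1 ⊢
  exact ⟨Y, mem_closedBall_zero_iff.mpr hY1, rfl⟩

lemma opNorm_of_isEmpty [IsEmpty a] (τ : Matrix a a ℂ → Matrix b b ℂ) :
    opNorm τ = frobNorm (τ 0) := by
  have hset : {c : ℝ | ∃ X : Matrix a a ℂ, X.IsHermitian ∧ frobNorm X ≤ 1 ∧
      c = frobNorm (τ X)} = {frobNorm (τ 0)} := by
    ext c
    refine ⟨fun ⟨X, _, _, hc⟩ => by rwa [Subsingleton.elim X 0] at hc, ?_⟩
    rintro rfl
    exact ⟨0, Matrix.isHermitian_zero, by simp [frobNorm], rfl⟩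
  rw [opNorm, hset, csSup_singleton]

variable [DecidableEq a] [DecidableEq b]

lemma minEntropy_of_isEmpty [IsEmpty a] (τ : Matrix a a ℂ → Matrix b b ℂ) :
    minEntropy τ = 0 := by
  have hset : {h : ℝ | ∃ X : Matrix a a ℂ, X.PosSemidef ∧ X.trace = 1 ∧
      h = entropy (τ X)} = ∅ :=
    Set.eq_empty_of_forall_notMem fun _ ⟨X, _, htr, _⟩ => by simp [Matrix.trace] at htr
  rw [minEntropy, hset, Real.sInf_empty]

lemma exists_posSemidef_trace_eq_one [Nonempty a] :
    ∃ X : Matrix a a ℂ, X.PosSemidef ∧ X.trace = 1 := by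
  obtain ⟨i⟩ := ‹Nonempty a›
  refine ⟨Matrix.diagonal (Pi.single i 1), Matrix.PosSemidef.diagonal fun j => ?_, by simp⟩
  by_cases h : j = i <;> simp [h]

end OpNormAndMinEntropy

section Kraus

variable {ι a b : Type*} [Fintype ι] [Fintype a]

def krausMap (A : ι → Matrix b a ℂ) (X : Matrix a a ℂ) : Matrix b b ℂ :=
  ∑ i, A i * X * (A i)ᴴ

lemma continuous_krausMap (A : ι → Matrix b a ℂ) : Continuous (krausMap A) := by
  unfold krausMap
  fun_prop

lemma Matrix.PosSemidef.krausMap [Fintype b] {X : Matrix a a ℂ} (hX : X.PosSemidef)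
    (A : ι → Matrix b a ℂ) : (krausMap A X).PosSemidef :=
  Finset.sum_induction _ Matrix.PosSemidef (fun _ _ => .add) .zero
    fun i _ => hX.mul_mul_conjTranspose_same (A i)

lemma trace_krausMap [Fintype b] [DecidableEq a] {A : ι → Matrix b a ℂ}
    (hA : ∑ i, (A i)ᴴ * A i = 1) (X : Matrix a a ℂ) : (krausMap A X).trace = X.trace := by
  calc (krausMap A X).trace = ∑ i, ((A i)ᴴ * A i * X).trace := by
        simp only [krausMap, Matrix.trace_sum]
        exact Finset.sum_congr rfl fun i _ => Matrix.trace_mul_cycle _ _ _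
    _ = X.trace := by rw [← Matrix.trace_sum, ← Finset.sum_mul, hA, Matrix.one_mul]

end Kraus

/-- For a quantum channel τ, the minimum output entropy satisfies
H(τ) ≥ -log σ₁(τ). -/
theorem stmt_4 {n m l : ℕ} (A : Fin l → Matrix (Fin m) (Fin n) ℂ)
    (hA : ∑ i, (A i)ᴴ * A i = 1) :
    -Real.log (opNorm (fun (X : Matrix (Fin n) (Fin n) ℂ) => ∑ i, A i * X * (A i)ᴴ)) ≤
      minEntropy (fun (X : Matrix (Fin n) (Fin n) ℂ) => ∑ i, A i * X * (A i)ᴴ) := by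
  change -Real.log (opNorm (krausMap A)) ≤ minEntropy (krausMap A)
  rcases isEmpty_or_nonempty (Fin n) with hn | hn
  · -- no density matrices: both sides are the junk value `0` (`sInf ∅ = 0`, `log 0 = 0`)
    rw [opNorm_of_isEmpty, minEntropy_of_isEmpty]
    simp [krausMap, frobNorm]
  obtain ⟨X₀, hX₀, hX₀tr⟩ := exists_posSemidef_trace_eq_one (a := Fin n)
  refine le_csInf ⟨_, X₀, hX₀, hX₀tr, rfl⟩ ?_
  rintro _ ⟨X, hX, hXtr, rfl⟩
  have hYtr : (krausMap A X).trace = 1 := (trace_krausMap hA X).trans hXtr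
  calc -Real.log (opNorm (krausMap A))
      ≤ -Real.log (frobNorm (krausMap A X)) :=
        neg_le_neg <| Real.log_le_log (frobNorm_pos_of_trace_eq_one hYtr)
          (frobNorm_le_opNorm (continuous_krausMap A) hX.isHermitian (hX.frobNorm_le_one hXtr))
    _ ≤ entropy (krausMap A X) := (hX.krausMap A).neg_log_frobNorm_le_entropy hYtr
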